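/- Let A and B̃ be finitely supported matrix masks whose symbols satisfy B̃^♯(z) A(z) + B̃^♯(−z) A(−z) = 0 as Laurent polynomials, where B̃^♯(z) = Σ_k B̃_k^T z^{−k}. Then D_{B̃^T} ∘ S_A = 0 on sequences. -/

import Mathlib

/-!
Expanding both operators, `(D_{B̃ᵀ} S_A c)_j = ∑_k (∑_s B̃_sᵀ A_{s+2(j-k)}) c_k`: the composed
operator is block-Toeplitz with blocks the even-shift correlations of `B̃` and `A`. At an even
shift `l` the factor `1 + (-1)^l` in the symbol identity equals `2`, so every such correlation
vanishes.
-/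

open scoped BigOperators
open Matrix

/-- Subdivision operator `(S_A c)_j = ∑_k A_{j-2k} c_k`. -/
noncomputable def subd {m : ℕ} (A : ℤ → Matrix (Fin (2 * m)) (Fin (2 * m)) ℝ)
    (c : ℤ → Fin (2 * m) → ℝ) : ℤ → Fin (2 * m) → ℝ :=
  fun j => ∑ᶠ k : ℤ, (A (j - 2 * k)).mulVec (c k)

/-- Decomposition operator `(D_M c)_j = ∑_i M_{i-2j} c_i`. -/
noncomputable def decomp {m : ℕ} (M : ℤ → Matrix (Fin (2 * m)) (Fin (2 * m)) ℝ)
    (c : ℤ → Fin (2 * m) → ℝ) : ℤ → Fin (2 * m) → ℝ :=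
  fun j => ∑ᶠ i : ℤ, (M (i - 2 * j)).mulVec (c i)

open Function

theorem finsum_comm_of_hasFiniteSupport {α β M : Type*} [AddCommMonoid M] {f : α → β → M}
    (hf : (uncurry f).HasFiniteSupport) : ∑ᶠ a, ∑ᶠ b, f a b = ∑ᶠ b, ∑ᶠ a, f a b := by
  have hf' : (uncurry f ∘ Prod.swap).HasFiniteSupport :=
    hf.preimage Prod.swap_injective.injOn
  calc ∑ᶠ a, ∑ᶠ b, f a b = ∑ᶠ p : α × β, uncurry f p := (finsum_curry _ hf).symm
    _ = ∑ᶠ q : β × α, uncurry f q.swap := (finsum_comp_equiv (Equiv.prodComm β α)).symm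
    _ = ∑ᶠ b, ∑ᶠ a, f a b := finsum_curry _ hf'

namespace Matrix

variable {ι m n R : Type*} [Fintype n]

theorem mulVec_finsum [CommSemiring R] (M : Matrix m n R) {v : ι → n → R}
    (hv : v.HasFiniteSupport) : M *ᵥ ∑ᶠ i, v i = ∑ᶠ i, M *ᵥ v i :=
  map_finsum M.mulVecLin hv

theorem finsum_mulVec [NonUnitalNonAssocSemiring R] {M : ι → Matrix m n R}
    (hM : M.HasFiniteSupport) (v : n → R) : (∑ᶠ i, M i) *ᵥ v = ∑ᶠ i, M i *ᵥ v :=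
  map_finsum (mulVec.addMonoidHomLeft v) hM

end Matrix

theorem decomp_transpose_subd_apply {m : ℕ} {A Bt : ℤ → Matrix (Fin (2 * m)) (Fin (2 * m)) ℝ}
    (hA : A.HasFiniteSupport) (hBt : Bt.HasFiniteSupport) (c : ℤ → Fin (2 * m) → ℝ) (j : ℤ) :
    decomp (fun j => (Bt j)ᵀ) (subd A c) j =
      ∑ᶠ k, (∑ᶠ s, (Bt s)ᵀ * A (s + 2 * (j - k))) *ᵥ c k := by
  have hsubd : ∀ i, (fun k => A (i - 2 * k) *ᵥ c k).HasFiniteSupport := fun i =>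
    (hA.preimage (fun a _ b _ (h : i - 2 * a = i - 2 * b) => by omega)).subset
      fun k hk h0 => hk (by simp [h0])
  have hprod :
      (uncurry fun i k => ((Bt (i - 2 * j))ᵀ * A (i - 2 * k)) *ᵥ c k).HasFiniteSupport :=
    (Set.Finite.preimage (f := fun p : ℤ × ℤ => (p.1 - 2 * j, p.1 - 2 * p.2))
      (fun p _ q _ h => by simp only [Prod.mk.injEq] at h; ext <;> omega) (hBt.prod hA)).subset
      fun ⟨i, k⟩ hik => ⟨fun h0 => hik (by simp [h0]), fun h0 => hik (by simp [h0])⟩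
  have hcorr : ∀ k, (fun i => (Bt (i - 2 * j))ᵀ * A (i - 2 * k)).HasFiniteSupport := fun k =>
    (hBt.preimage (fun a _ b _ (h : a - 2 * j = b - 2 * j) => by omega)).subset
      fun i hi h0 => hi (by simp [h0])
  calc ∑ᶠ i, (Bt (i - 2 * j))ᵀ *ᵥ ∑ᶠ k, A (i - 2 * k) *ᵥ c k
      = ∑ᶠ i, ∑ᶠ k, ((Bt (i - 2 * j))ᵀ * A (i - 2 * k)) *ᵥ c k := by
        simp only [mulVec_finsum _ (hsubd _), mulVec_mulVec]
    _ = ∑ᶠ k, ∑ᶠ i, ((Bt (i - 2 * j))ᵀ * A (i - 2 * k)) *ᵥ c k :=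
        finsum_comm_of_hasFiniteSupport hprod
    _ = ∑ᶠ k, (∑ᶠ i, (Bt (i - 2 * j))ᵀ * A (i - 2 * k)) *ᵥ c k := by
        simp only [finsum_mulVec (hcorr _)]
    _ = ∑ᶠ k, (∑ᶠ s, (Bt s)ᵀ * A (s + 2 * (j - k))) *ᵥ c k := by
        refine finsum_congr fun k => ?_
        rw [← finsum_comp_equiv (Equiv.addRight (2 * j))]
        simp only [Equiv.coe_addRight, add_sub_cancel_right, add_sub_assoc, ← mul_sub]

/-- If the formal Laurent identity `Bt^♯(z) A(z) + Bt^♯(−z) A(−z) = 0` holds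
(stated coefficientwise, `Bt^♯(z) = ∑_k Bt_kᵀ z^{−k}`), then `D_{Btᵀ} ∘ S_A = 0`. -/
theorem symbol_cancellation_implies_zero {m : ℕ}
    (A Bt : ℤ → Matrix (Fin (2 * m)) (Fin (2 * m)) ℝ)
    (hA : (Function.support A).Finite) (hBt : (Function.support Bt).Finite)
    (hsymb : ∀ l : ℤ, (∑ᶠ i : ℤ, ((1 : ℝ) + (-1 : ℝ) ^ l) • ((Bt i)ᵀ * A (i + l))) = 0) :
    ∀ c : ℤ → Fin (2 * m) → ℝ, decomp (fun j => (Bt j)ᵀ) (subd A c) = 0 := by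
  have hcorr : ∀ l : ℤ, ∑ᶠ i, (Bt i)ᵀ * A (i + 2 * l) = 0 := fun l => by
    have h := hsymb (2 * l)
    rwa [(even_two_mul l).neg_one_zpow, one_add_one_eq_two, ← smul_finsum,
      smul_eq_zero_iff_right two_ne_zero] at h
  intro c
  funext j
  simp only [decomp_transpose_subd_apply hA hBt, hcorr, zero_mulVec, finsum_zero, Pi.zero_apply]
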